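/- arXiv:2410.05795 — 3 statements merged into one kernel-verified Lean document; each statement's English description precedes it below -/
import Mathlib

section
/- For any invertible matrix g ∈ GL_d(R) and unit vectors u, v ∈ R^d with ⟨u,v⟩ ≥ 0, the images of the directions satisfy d(g·ū, g·v̄) ≤ 2√2 · N(g)² · d(ū, v̄), where d is the angular distance and N(g) = max(‖g‖, ‖g⁻¹‖). -/
open scoped RealInnerProductSpace

noncomputable section

abbrev E (d : ℕ) := EuclideanSpace ℝ (Fin d)

abbrev Gd (d : ℕ) := (E d →L[ℝ] E d)ˣ

/-- `N(g) = max(‖g‖, ‖g⁻¹‖)`. -/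
def Nnorm {d : ℕ} (g : Gd d) : ℝ :=
  max ‖(g : E d →L[ℝ] E d)‖ ‖((g⁻¹ : Gd d) : E d →L[ℝ] E d)‖

/-- Angular distance between the directions of nonzero vectors `x, y`:
`d(x̄, ȳ) = ‖x ∧ y‖/(‖x‖‖y‖) = √(‖x‖²‖y‖² − ⟨x,y⟩²)/(‖x‖‖y‖)`. -/
def angDist {d : ℕ} (x y : E d) : ℝ :=
  Real.sqrt (‖x‖ ^ 2 * ‖y‖ ^ 2 - ⟪x, y⟫ ^ 2) / (‖x‖ * ‖y‖)

lemma angDist_smul_smul {d : ℕ} (x y : E d) {c c' : ℝ} (hc : 0 < c) (hc' : 0 < c') :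
    angDist (c • x) (c' • y) = angDist x y := by
  unfold angDist
  rcases eq_or_ne x 0 with rfl | hx
  · simp
  rcases eq_or_ne y 0 with rfl | hy
  · simp
  rw [norm_smul, norm_smul, real_inner_smul_left, real_inner_smul_right,
    Real.norm_eq_abs, Real.norm_eq_abs, abs_of_pos hc, abs_of_pos hc']
  have h1 : (c * ‖x‖) ^ 2 * (c' * ‖y‖) ^ 2 - (c * (c' * ⟪x, y⟫)) ^ 2
      = (c * c') ^ 2 * (‖x‖ ^ 2 * ‖y‖ ^ 2 - ⟪x, y⟫ ^ 2) := by ring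
  rw [h1, Real.sqrt_mul (by positivity), Real.sqrt_sq (by positivity)]
  have hxn : (0:ℝ) < ‖x‖ := norm_pos_iff.mpr hx
  have hyn : (0:ℝ) < ‖y‖ := norm_pos_iff.mpr hy
  field_simp

lemma angDist_le_norm_sub {d : ℕ} (a b : E d) (ha : ‖a‖ = 1) (hb : ‖b‖ = 1) :
    angDist a b ≤ ‖a - b‖ := by
  unfold angDist
  rw [ha, hb]
  have hsq : ‖a - b‖ ^ 2 = 2 - 2 * ⟪a, b⟫ := by
    rw [norm_sub_sq_real, ha, hb]; ring
  have h1 : (1:ℝ) ^ 2 * 1 ^ 2 - ⟪a, b⟫ ^ 2 ≤ ‖a - b‖ ^ 2 := by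
    rw [hsq]; nlinarith [sq_nonneg (1 - ⟪a, b⟫)]
  calc Real.sqrt (1 ^ 2 * 1 ^ 2 - ⟪a, b⟫ ^ 2) / (1 * 1)
      = Real.sqrt (1 ^ 2 * 1 ^ 2 - ⟪a, b⟫ ^ 2) := by ring
    _ ≤ Real.sqrt (‖a - b‖ ^ 2) := Real.sqrt_le_sqrt h1
    _ = ‖a - b‖ := Real.sqrt_sq (norm_nonneg _)

lemma norm_sub_le_sqrt_two_angDist {d : ℕ} (a b : E d) (ha : ‖a‖ = 1) (hb : ‖b‖ = 1)
    (hab : 0 ≤ ⟪a, b⟫) : ‖a - b‖ ≤ Real.sqrt 2 * angDist a b := by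
  unfold angDist
  rw [ha, hb]
  have hle : ⟪a, b⟫ ≤ 1 := by
    have := real_inner_le_norm a b
    rwa [ha, hb, mul_one] at this
  have hsq : ‖a - b‖ ^ 2 = 2 - 2 * ⟪a, b⟫ := by
    rw [norm_sub_sq_real, ha, hb]; ring
  have h1 : ‖a - b‖ ^ 2 ≤ 2 * ((1:ℝ) ^ 2 * 1 ^ 2 - ⟪a, b⟫ ^ 2) := by
    rw [hsq]; nlinarith
  calc ‖a - b‖ = Real.sqrt (‖a - b‖ ^ 2) := (Real.sqrt_sq (norm_nonneg _)).symm
    _ ≤ Real.sqrt (2 * ((1:ℝ) ^ 2 * 1 ^ 2 - ⟪a, b⟫ ^ 2)) := Real.sqrt_le_sqrt h1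
    _ = Real.sqrt 2 * Real.sqrt ((1:ℝ) ^ 2 * 1 ^ 2 - ⟪a, b⟫ ^ 2) :=
        Real.sqrt_mul (by norm_num) _
    _ = Real.sqrt 2 * (Real.sqrt ((1:ℝ) ^ 2 * 1 ^ 2 - ⟪a, b⟫ ^ 2) / (1 * 1)) := by ring

/-- For `g ∈ GL_d(ℝ)` and unit vectors `u, v` with `⟨u,v⟩ ≥ 0`, the images of the
directions satisfy `d(g·ū, g·v̄) ≤ 2√2 · N(g)² · d(ū, v̄)`. -/
theorem angDist_map_le
    {d : ℕ} (g : Gd d) (u v : E d)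
    (hu : ‖u‖ = 1) (hv : ‖v‖ = 1) (huv : 0 ≤ ⟪u, v⟫) :
    angDist ((g : E d →L[ℝ] E d) u) ((g : E d →L[ℝ] E d) v)
      ≤ 2 * Real.sqrt 2 * Nnorm g ^ 2 * angDist u v := by
  set G := (g : E d →L[ℝ] E d) with hG
  set Gi := ((g⁻¹ : Gd d) : E d →L[ℝ] E d) with hGi
  set x := G u with hxdef
  set y := G v with hydef
  have hinv : ∀ w : E d, Gi (G w) = w := by
    intro w
    have : (Gi.comp G) w = w := by
      have h : Gi.comp G = ContinuousLinearMap.id ℝ (E d) := by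
        rw [hGi, hG]
        ext z
        simp [ContinuousLinearMap.comp_apply, ← ContinuousLinearMap.mul_apply]
      rw [h]; rfl
    simpa using this
  have hu0 : u ≠ 0 := by intro h; rw [h] at hu; simp at hu
  have hv0 : v ≠ 0 := by intro h; rw [h] at hv; simp at hv
  have hx0 : x ≠ 0 := by
    intro h
    apply hu0
    have := hinv u
    rw [← hxdef, h, map_zero] at this
    exact this.symm
  have hy0 : y ≠ 0 := by
    intro h
    apply hv0
    have := hinv v
    rw [← hydef, h, map_zero] at this
    exact this.symm
  have hxn : (0:ℝ) < ‖x‖ := norm_pos_iff.mpr hx0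
  have hyn : (0:ℝ) < ‖y‖ := norm_pos_iff.mpr hy0
  set a := ‖x‖⁻¹ • x with hadef
  set b := ‖y‖⁻¹ • y with hbdef
  have han : ‖a‖ = 1 := by
    rw [hadef, norm_smul, Real.norm_eq_abs, abs_of_pos (by positivity)]
    field_simp
  have hbn : ‖b‖ = 1 := by
    rw [hbdef, norm_smul, Real.norm_eq_abs, abs_of_pos (by positivity)]
    field_simp
  -- N bounds
  set N := Nnorm g with hN
  have hNg : ‖G‖ ≤ N := le_max_left _ _
  have hNgi : ‖Gi‖ ≤ N := le_max_right _ _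
  have hN0 : 0 ≤ N := le_trans (norm_nonneg _) hNg
  -- 1/‖x‖ ≤ ‖Gi‖
  have hxinv : ‖x‖⁻¹ ≤ ‖Gi‖ := by
    have h1 : ‖u‖ ≤ ‖Gi‖ * ‖x‖ := by
      calc ‖u‖ = ‖Gi x‖ := by rw [hxdef, hinv]
        _ ≤ ‖Gi‖ * ‖x‖ := Gi.le_opNorm x
    rw [hu] at h1
    rw [inv_le_iff_one_le_mul₀ hxn]
    linarith
  -- key: ‖a - b‖ ≤ 2 * ‖x‖⁻¹ * ‖x - y‖
  have hkey : ‖a - b‖ ≤ 2 * ‖x‖⁻¹ * ‖x - y‖ := by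
    have hsplit : a - b = ‖x‖⁻¹ • (x - y) + (‖x‖⁻¹ - ‖y‖⁻¹) • y := by
      rw [hadef, hbdef]
      module
    calc ‖a - b‖ ≤ ‖‖x‖⁻¹ • (x - y)‖ + ‖(‖x‖⁻¹ - ‖y‖⁻¹) • y‖ := by
          rw [hsplit]; exact norm_add_le _ _
      _ = ‖x‖⁻¹ * ‖x - y‖ + |‖x‖⁻¹ - ‖y‖⁻¹| * ‖y‖ := by
          rw [norm_smul, norm_smul, Real.norm_eq_abs, Real.norm_eq_abs,
            abs_of_pos (by positivity)]
      _ ≤ 2 * ‖x‖⁻¹ * ‖x - y‖ := by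
          have hdiff : ‖x‖⁻¹ - ‖y‖⁻¹ = (‖y‖ - ‖x‖) * (‖x‖⁻¹ * ‖y‖⁻¹) := by
            field_simp
          have h2 : |‖x‖⁻¹ - ‖y‖⁻¹| * ‖y‖ = |‖y‖ - ‖x‖| * ‖x‖⁻¹ := by
            rw [hdiff, abs_mul, abs_of_pos (show (0:ℝ) < ‖x‖⁻¹ * ‖y‖⁻¹ by positivity)]
            field_simp
          have h3 : |‖y‖ - ‖x‖| ≤ ‖x - y‖ := by
            rw [abs_sub_comm]
            exact abs_norm_sub_norm_le x y
          rw [h2]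
          nlinarith [mul_le_mul_of_nonneg_right h3 (le_of_lt (inv_pos.mpr hxn))]
  have hxy : ‖x - y‖ ≤ ‖G‖ * ‖u - v‖ := by
    rw [hxdef, hydef, ← map_sub]
    exact G.le_opNorm _
  have hab : ‖a - b‖ ≤ 2 * N ^ 2 * ‖u - v‖ := by
    calc ‖a - b‖ ≤ 2 * ‖x‖⁻¹ * ‖x - y‖ := hkey
      _ ≤ 2 * ‖Gi‖ * (‖G‖ * ‖u - v‖) := by
          apply mul_le_mul (by linarith) hxy (norm_nonneg _)
          positivity
      _ ≤ 2 * N ^ 2 * ‖u - v‖ := by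
          have hGi0 : 0 ≤ ‖Gi‖ := norm_nonneg _
          have hG0 : 0 ≤ ‖G‖ := norm_nonneg _
          nlinarith [norm_nonneg (u - v), mul_le_mul hNgi hNg hG0 hN0]
  have heq : angDist x y = angDist a b := by
    rw [hadef, hbdef, angDist_smul_smul _ _ (by positivity) (by positivity)]
  have huv2 : ‖u - v‖ ≤ Real.sqrt 2 * angDist u v := norm_sub_le_sqrt_two_angDist u v hu hv huv
  have hs2 : (0:ℝ) ≤ Real.sqrt 2 := Real.sqrt_nonneg 2
  calc angDist x y = angDist a b := heq
    _ ≤ ‖a - b‖ := angDist_le_norm_sub a b han hbn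
    _ ≤ 2 * N ^ 2 * ‖u - v‖ := hab
    _ ≤ 2 * N ^ 2 * (Real.sqrt 2 * angDist u v) := by
        apply mul_le_mul_of_nonneg_left huv2 (by positivity)
    _ = 2 * Real.sqrt 2 * N ^ 2 * angDist u v := by ring
end
end

section
/- For any two invertible matrices g, g' ∈ GL_d(R) and any unit vector u ∈ R^d, the angular distance between g·ū and g'·ū satisfies d(g·ū, g'·ū) ≤ 2 · N(g) · ‖g − g'‖, where N(g) = max(‖g‖, ‖g⁻¹‖). -/
open scoped RealInnerProductSpace

noncomputable section

lemma angDist_le_norm_sub_s4 {d : ℕ} (x y : E d) (hx : x ≠ 0) (hy : y ≠ 0) :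
    angDist x y ≤ ‖(‖x‖⁻¹ • x) - (‖y‖⁻¹ • y)‖ := by
  have hxn : (0:ℝ) < ‖x‖ := norm_pos_iff.mpr hx
  have hyn : (0:ℝ) < ‖y‖ := norm_pos_iff.mpr hy
  set s : ℝ := ⟪x, y⟫ with hs
  have hcs : |s| ≤ ‖x‖ * ‖y‖ := abs_real_inner_le_norm x y
  have hD : 0 ≤ ‖x‖ ^ 2 * ‖y‖ ^ 2 - s ^ 2 := by nlinarith [abs_nonneg s, sq_abs s]
  set t : ℝ := s / (‖x‖ * ‖y‖) with htdef
  have ht1 : |t| ≤ 1 := by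
    rw [htdef, abs_div]
    rw [div_le_one (by positivity)]
    simpa [abs_of_pos, hxn, hyn, abs_mul] using hcs
  have hinner : ⟪(‖x‖⁻¹ • x), (‖y‖⁻¹ • y)⟫ = t := by
    rw [real_inner_smul_left, real_inner_smul_right, ← hs, htdef,
      eq_div_iff (by positivity)]
    field_simp
  have hnormsq : ‖(‖x‖⁻¹ • x) - (‖y‖⁻¹ • y)‖ ^ 2 = 2 - 2 * t := by
    rw [norm_sub_sq_real, hinner, norm_smul, norm_smul]
    simp [abs_of_pos hxn, abs_of_pos hyn, inv_mul_cancel₀ hxn.ne', inv_mul_cancel₀ hyn.ne']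
    ring
  have key : angDist x y = Real.sqrt (1 - t ^ 2) := by
    rw [angDist, ← hs]
    rw [show ‖x‖ ^ 2 * ‖y‖ ^ 2 - s ^ 2 = (1 - t^2) * (‖x‖ * ‖y‖)^2 by
      rw [htdef]; field_simp]
    have h01 : t ^ 2 ≤ 1 := by rw [← sq_abs]; exact pow_le_one₀ (abs_nonneg t) ht1
    rw [Real.sqrt_mul (by linarith), Real.sqrt_sq (by positivity)]
    field_simp
  rw [key]
  have : ‖(‖x‖⁻¹ • x) - (‖y‖⁻¹ • y)‖ = Real.sqrt (2 - 2*t) := by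
    rw [← hnormsq, Real.sqrt_sq (norm_nonneg _)]
  rw [this]
  apply Real.sqrt_le_sqrt
  nlinarith [sq_abs t]

lemma norm_normalize_sub {d : ℕ} (x y : E d) (hx : x ≠ 0) (hy : y ≠ 0) :
    ‖(‖x‖⁻¹ • x) - (‖y‖⁻¹ • y)‖ ≤ 2 * ‖x - y‖ / ‖x‖ := by
  have hxn : (0:ℝ) < ‖x‖ := norm_pos_iff.mpr hx
  have hyn : (0:ℝ) < ‖y‖ := norm_pos_iff.mpr hy
  have decomp : (‖x‖⁻¹ • x) - (‖y‖⁻¹ • y) = ‖x‖⁻¹ • (x - y) + (‖x‖⁻¹ - ‖y‖⁻¹) • y := by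
    module
  rw [decomp]
  calc ‖‖x‖⁻¹ • (x - y) + (‖x‖⁻¹ - ‖y‖⁻¹) • y‖
      ≤ ‖‖x‖⁻¹ • (x - y)‖ + ‖(‖x‖⁻¹ - ‖y‖⁻¹) • y‖ := norm_add_le _ _
    _ = ‖x - y‖ / ‖x‖ + |‖x‖⁻¹ - ‖y‖⁻¹| * ‖y‖ := by
        rw [norm_smul, norm_smul, Real.norm_eq_abs, Real.norm_eq_abs,
          abs_of_pos (inv_pos.mpr hxn)]
        ring
    _ ≤ ‖x - y‖ / ‖x‖ + ‖x - y‖ / ‖x‖ := by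
        gcongr _ + ?_
        have habs : |‖x‖⁻¹ - ‖y‖⁻¹| = |‖y‖ - ‖x‖| / (‖x‖ * ‖y‖) := by
          rw [show ‖x‖⁻¹ - ‖y‖⁻¹ = (‖y‖ - ‖x‖) / (‖x‖ * ‖y‖) by field_simp,
            abs_div, abs_of_pos (show (0:ℝ) < ‖x‖ * ‖y‖ by positivity)]
        rw [habs]
        have h1 : |‖y‖ - ‖x‖| ≤ ‖x - y‖ := by
          rw [abs_sub_comm]
          exact abs_norm_sub_norm_le x y
        calc |‖y‖ - ‖x‖| / (‖x‖ * ‖y‖) * ‖y‖ = |‖y‖ - ‖x‖| / ‖x‖ := by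
              field_simp
          _ ≤ ‖x - y‖ / ‖x‖ := by gcongr
    _ = 2 * ‖x - y‖ / ‖x‖ := by ring

/-- For `g, g' ∈ GL_d(ℝ)` and a unit vector `u`, the angular distance between
`g·ū` and `g'·ū` satisfies `d(g·ū, g'·ū) ≤ 2 · N(g) · ‖g − g'‖`. -/
theorem angDist_map_map_le
    {d : ℕ} (g g' : Gd d) (u : E d) (hu : ‖u‖ = 1) :
    angDist ((g : E d →L[ℝ] E d) u) ((g' : E d →L[ℝ] E d) u)
      ≤ 2 * Nnorm g * ‖(g : E d →L[ℝ] E d) - (g' : E d →L[ℝ] E d)‖ := by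
  set A := (g : E d →L[ℝ] E d) with hA
  set B := (g' : E d →L[ℝ] E d) with hB
  have hune : u ≠ 0 := by intro h; rw [h, norm_zero] at hu; norm_num at hu
  have hinv : ∀ (h : Gd d) (v : E d),
      ((h⁻¹ : Gd d) : E d →L[ℝ] E d) ((h : E d →L[ℝ] E d) v) = v := by
    intro h v
    have h1 : ((h⁻¹ : Gd d) : E d →L[ℝ] E d) * (h : E d →L[ℝ] E d) = 1 :=
      h.inv_mul
    calc ((h⁻¹ : Gd d) : E d →L[ℝ] E d) ((h : E d →L[ℝ] E d) v)
        = (((h⁻¹ : Gd d) : E d →L[ℝ] E d) * (h : E d →L[ℝ] E d)) v := rfl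
      _ = v := by rw [h1]; rfl
  have hgu : A u ≠ 0 := by
    intro h
    apply hune
    rw [← hinv g u, ← hA, h, map_zero]
  have hg'u : B u ≠ 0 := by
    intro h
    apply hune
    rw [← hinv g' u, ← hB, h, map_zero]
  have hAun : (0:ℝ) < ‖A u‖ := norm_pos_iff.mpr hgu
  have hNi : 1 ≤ ‖((g⁻¹ : Gd d) : E d →L[ℝ] E d)‖ * ‖A u‖ := by
    calc (1:ℝ) = ‖u‖ := hu.symm
      _ = ‖((g⁻¹ : Gd d) : E d →L[ℝ] E d) (A u)‖ := by rw [hinv g u]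
      _ ≤ ‖((g⁻¹ : Gd d) : E d →L[ℝ] E d)‖ * ‖A u‖ :=
          ContinuousLinearMap.le_opNorm _ _
  have hN : ‖((g⁻¹ : Gd d) : E d →L[ℝ] E d)‖ ≤ Nnorm g := le_max_right _ _
  have step3 : ‖A u - B u‖ ≤ ‖A - B‖ := by
    have := (A - B).le_opNorm u
    rwa [ContinuousLinearMap.sub_apply, hu, mul_one] at this
  calc angDist (A u) (B u)
      ≤ ‖(‖A u‖⁻¹ • A u) - (‖B u‖⁻¹ • B u)‖ := angDist_le_norm_sub_s4 _ _ hgu hg'u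
    _ ≤ 2 * ‖A u - B u‖ / ‖A u‖ := norm_normalize_sub _ _ hgu hg'u
    _ ≤ 2 * Nnorm g * ‖A - B‖ := by
        rw [div_le_iff₀ hAun]
        have hNnn : 0 ≤ Nnorm g := le_trans (norm_nonneg _) hN
        nlinarith [norm_nonneg (A - B), norm_nonneg (A u - B u),
          mul_le_mul_of_nonneg_left hNi (mul_nonneg (by norm_num : (0:ℝ) ≤ 2) (norm_nonneg (A - B))),
          mul_le_mul_of_nonneg_right hN (mul_nonneg hAun.le (norm_nonneg (A - B)))]
end
end

section
/- With parameters ε = δ₀/8, θ = 3ε, α = 5ε (so α = θ + 2ε), let h be continuous on X = GL_d(R) × P(R^d) with |h|_θ < ∞ and k_{ε,α}(h) < ∞. Then for every t ∈ R, the function e^{itρ} h, where ρ(g,ū) = log‖gu‖ for a unit representative u, satisfies k_{ε,α}(e^{itρ}h) ≤ 2|t|^ε |h|_θ + k_{ε,α}(h). -/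
open scoped LinearAlgebra.Projectivization RealInnerProductSpace ENNReal
open MeasureTheory

noncomputable section

instance (d : ℕ) : TopologicalSpace (ℙ ℝ (E d)) := instTopologicalSpaceQuotient

/-- Angular distance on projective space, via representatives (it is
scale-invariant). -/
def dP {d : ℕ} (x y : ℙ ℝ (E d)) : ℝ := angDist x.rep y.rep

/-- The norm cocycle `ρ(g, v̄) = log (‖gv‖/‖v‖)`. -/
def ρ {d : ℕ} (g : Gd d) (x : ℙ ℝ (E d)) : ℝ :=
  Real.log (‖(g : E d →L[ℝ] E d) x.rep‖ / ‖x.rep‖)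

/-- The weighted sup-seminorm `|h|_θ = sup_{(g,ū)} |h(g,ū)| / N(g)^θ`
(with values in `[0,∞]`). -/
def nθ {d : ℕ} (θ : ℝ) (h : Gd d → ℙ ℝ (E d) → ℂ) : ℝ≥0∞ :=
  ⨆ (g : Gd d) (x : ℙ ℝ (E d)),
    ENNReal.ofReal (‖h g x‖ / Nnorm g ^ θ)

/-- The weighted Hölder seminorm in the projective variable:
`k_{ε,α}(h) = sup_{g, ū ≠ v̄} |h(g,ū)−h(g,v̄)| / (d(ū,v̄)^ε N(g)^α)`. -/
def kP {d : ℕ} (ε α : ℝ) (h : Gd d → ℙ ℝ (E d) → ℂ) : ℝ≥0∞ :=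
  ⨆ (g : Gd d) (x : ℙ ℝ (E d)) (y : ℙ ℝ (E d)) (_ : x ≠ y),
    ENNReal.ofReal (‖h g x - h g y‖ / (dP x y ^ ε * Nnorm g ^ α))

/-- The weighted Hölder seminorm in the matrix variable:
`k'_{ε,β}(h) = sup_{g ≠ g', ū} |h(g,ū)−h(g',ū)| / (‖g−g'‖^ε N(g)^β N(g')^β)`. -/
def kG {d : ℕ} (ε β : ℝ) (h : Gd d → ℙ ℝ (E d) → ℂ) : ℝ≥0∞ :=
  ⨆ (g : Gd d) (g' : Gd d) (_ : g ≠ g') (x : ℙ ℝ (E d)),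
    ENNReal.ofReal (‖h g x - h g' x‖ /
      (‖(g : E d →L[ℝ] E d) - (g' : E d →L[ℝ] E d)‖ ^ ε * Nnorm g ^ β * Nnorm g' ^ β))

/-- The Banach norm `‖h‖_B = |h|_θ + k_{ε,α}(h) + k'_{ε,β}(h)` (in `[0,∞]`). -/
def normB {d : ℕ} (θ ε α β : ℝ) (h : Gd d → ℙ ℝ (E d) → ℂ) : ℝ≥0∞ :=
  nθ θ h + kP ε α h + kG ε β h

/-!
Write `e(ū) = e^{itρ(g,ū)}` and split `e(ū) h(g,ū) − e(v̄) h(g,v̄)` as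
`(e(ū) − e(v̄)) h(g,ū) + e(v̄) (h(g,ū) − h(g,v̄))`. The second term is controlled by
`k_{ε,α}(h)`. For the first, `ρ(g,·)` is `√2 N(g)²`-Lipschitz for the angular distance, and
`|e^{ia} − e^{ib}| = 2|sin((a−b)/2)| ≤ 2|(a−b)/2|^ε` as `ε ≤ 1`; so the first term is at most
`2|t|^ε N(g)^{2ε} d(ū,v̄)^ε · |h|_θ N(g)^θ`, and `2ε + θ = α`.
-/

open Complex

section AngularDistance

variable {d : ℕ}

lemma angDist_nonneg (x y : E d) : 0 ≤ angDist x y := by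
  unfold angDist
  positivity

lemma angDist_smul {a b : ℝ} (ha : a ≠ 0) (hb : b ≠ 0) (x y : E d) :
    angDist (a • x) (b • y) = angDist x y := by
  have hab : |a| * |b| ≠ 0 := by positivity
  have hrad : (|a| * ‖x‖) ^ 2 * (|b| * ‖y‖) ^ 2 - (a * (b * ⟪x, y⟫)) ^ 2
      = (|a| * |b|) ^ 2 * (‖x‖ ^ 2 * ‖y‖ ^ 2 - ⟪x, y⟫ ^ 2) := by
    simp only [mul_pow, sq_abs]
    ring
  rw [angDist, angDist, norm_smul, norm_smul, real_inner_smul_left, real_inner_smul_right,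
    Real.norm_eq_abs, Real.norm_eq_abs, hrad, Real.sqrt_mul (sq_nonneg _),
    Real.sqrt_sq (by positivity), mul_mul_mul_comm, mul_div_mul_left _ _ hab]

lemma angDist_of_norm_eq_one {u v : E d} (hu : ‖u‖ = 1) (hv : ‖v‖ = 1) :
    angDist u v = √(1 - ⟪u, v⟫ ^ 2) := by
  simp [angDist, hu, hv]

lemma min_norm_sub_norm_add_le {u v : E d} (hu : ‖u‖ = 1) (hv : ‖v‖ = 1) :
    min ‖u - v‖ ‖u + v‖ ≤ √2 * angDist u v := by
  have hc : |⟪u, v⟫| ≤ 1 := by simpa [hu, hv] using abs_real_inner_le_norm u v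
  have hsub : ‖u - v‖ = √(2 - 2 * ⟪u, v⟫) := by
    rw [← Real.sqrt_sq (norm_nonneg (u - v)), norm_sub_sq_real, hu, hv]
    ring_nf
  have hadd : ‖u + v‖ = √(2 + 2 * ⟪u, v⟫) := by
    rw [← Real.sqrt_sq (norm_nonneg (u + v)), norm_add_sq_real, hu, hv]
    ring_nf
  rw [angDist_of_norm_eq_one hu hv, ← Real.sqrt_mul zero_le_two, hsub, hadd]
  rcases abs_le.1 hc with ⟨hc₁, hc₂⟩
  rcases le_total 0 ⟪u, v⟫ with hpos | hneg
  · exact (min_le_left _ _).trans (Real.sqrt_le_sqrt (by nlinarith))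
  · exact (min_le_right _ _).trans (Real.sqrt_le_sqrt (by nlinarith))

def unitRep (x : ℙ ℝ (E d)) : E d := ‖x.rep‖⁻¹ • x.rep

lemma norm_unitRep (x : ℙ ℝ (E d)) : ‖unitRep x‖ = 1 :=
  norm_smul_inv_norm x.rep_nonzero

lemma dP_nonneg (x y : ℙ ℝ (E d)) : 0 ≤ dP x y := angDist_nonneg _ _

lemma dP_eq_angDist_unitRep (x y : ℙ ℝ (E d)) :
    dP x y = angDist (unitRep x) (unitRep y) :=
  (angDist_smul (inv_ne_zero (norm_ne_zero_iff.2 x.rep_nonzero))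
    (inv_ne_zero (norm_ne_zero_iff.2 y.rep_nonzero)) _ _).symm

end AngularDistance

section LogNorm

variable {V W : Type*} [NormedAddCommGroup V] [NormedSpace ℝ V]
  [NormedAddCommGroup W] [NormedSpace ℝ W] {G : V →L[ℝ] W} {G' : W →L[ℝ] V}

lemma log_norm_apply_sub_log_norm_apply_le (hG : Function.LeftInverse G' G) {u v : V}
    (hu : u ≠ 0) (hv : ‖v‖ = 1) :
    Real.log ‖G u‖ - Real.log ‖G v‖ ≤ ‖G‖ * ‖G'‖ * ‖u - v‖ := by
  have hpos : ∀ {w : V}, w ≠ 0 → 0 < ‖G w‖ := fun hw ↦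
    norm_pos_iff.2 fun h ↦ hw (hG.injective (h.trans (map_zero G).symm))
  have hGu := hpos hu
  have hGv := hpos (norm_ne_zero_iff.1 (hv.symm ▸ one_ne_zero))
  have hGv_inv : ‖G v‖⁻¹ ≤ ‖G'‖ := by
    rw [inv_le_iff_one_le_mul₀ hGv, ← hv]
    simpa [hG v] using G'.le_opNorm (G v)
  calc Real.log ‖G u‖ - Real.log ‖G v‖
      = Real.log (‖G u‖ / ‖G v‖) := (Real.log_div hGu.ne' hGv.ne').symm
    _ ≤ ‖G u‖ / ‖G v‖ - 1 := Real.log_le_sub_one_of_pos (div_pos hGu hGv)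
    _ = (‖G u‖ - ‖G v‖) * ‖G v‖⁻¹ := by field_simp
    _ ≤ (‖G‖ * ‖u - v‖) * ‖G'‖ := by
        gcongr
        calc ‖G u‖ - ‖G v‖ ≤ ‖G u - G v‖ := norm_sub_norm_le _ _
          _ ≤ ‖G‖ * ‖u - v‖ := by rw [← map_sub]; exact G.le_opNorm _
    _ = ‖G‖ * ‖G'‖ * ‖u - v‖ := by ring

lemma abs_log_norm_apply_sub_le (hG : Function.LeftInverse G' G) {u v : V}
    (hu : ‖u‖ = 1) (hv : ‖v‖ = 1) :
    |Real.log ‖G u‖ - Real.log ‖G v‖| ≤ ‖G‖ * ‖G'‖ * ‖u - v‖ := by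
  have hne : ∀ {w : V}, ‖w‖ = 1 → w ≠ 0 := fun hw ↦ norm_ne_zero_iff.1 (by simp [hw])
  refine abs_sub_le_iff.2 ⟨log_norm_apply_sub_log_norm_apply_le hG (hne hu) hv, ?_⟩
  rw [norm_sub_rev]
  exact log_norm_apply_sub_log_norm_apply_le hG (hne hv) hu

end LogNorm

lemma abs_sin_le_abs_rpow {ε : ℝ} (hε₀ : 0 ≤ ε) (hε₁ : ε ≤ 1) (y : ℝ) :
    |Real.sin y| ≤ |y| ^ ε := by
  rcases le_total |y| 1 with h | h
  · exact Real.abs_sin_le_abs.trans (Real.self_le_rpow_of_le_one (abs_nonneg y) h hε₁)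
  · exact (Real.abs_sin_le_one y).trans (Real.one_le_rpow h hε₀)

lemma norm_exp_I_mul_sub_exp_I_mul_le {ε : ℝ} (hε₀ : 0 ≤ ε) (hε₁ : ε ≤ 1) (a b : ℝ) :
    ‖exp (I * a) - exp (I * b)‖ ≤ 2 * |(a - b) / 2| ^ ε := by
  have hfactor : exp (I * a) - exp (I * b) = exp (I * b) * (exp (I * ↑(a - b)) - 1) := by
    rw [mul_sub, ← exp_add]
    push_cast
    ring_nf
  rw [hfactor, norm_mul, norm_exp_I_mul_ofReal, one_mul, norm_exp_I_mul_ofReal_sub_one,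
    norm_mul, Real.norm_eq_abs, Real.norm_eq_abs, abs_two]
  exact mul_le_mul_of_nonneg_left (abs_sin_le_abs_rpow hε₀ hε₁ _) zero_le_two

lemma norm_mul_sub_mul_le {e₁ e₂ A B : ℂ} (he₂ : ‖e₂‖ = 1) :
    ‖e₁ * A - e₂ * B‖ ≤ ‖e₁ - e₂‖ * ‖A‖ + ‖A - B‖ := by
  calc ‖e₁ * A - e₂ * B‖ = ‖(e₁ - e₂) * A + e₂ * (A - B)‖ := by ring_nf
    _ ≤ ‖e₁ - e₂‖ * ‖A‖ + ‖A - B‖ := by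
        simpa [he₂] using norm_add_le ((e₁ - e₂) * A) (e₂ * (A - B))

section NormCocycle

variable {d : ℕ}

lemma Nnorm_nonneg (g : Gd d) : 0 ≤ Nnorm g :=
  (norm_nonneg _).trans (le_max_left _ _)

lemma norm_mul_norm_inv_le_Nnorm_sq (g : Gd d) :
    ‖(g : E d →L[ℝ] E d)‖ * ‖((g⁻¹ : Gd d) : E d →L[ℝ] E d)‖ ≤ Nnorm g ^ 2 := by
  rw [sq]
  exact mul_le_mul (le_max_left _ _) (le_max_right _ _) (norm_nonneg _) (Nnorm_nonneg g)

lemma leftInverse_coe_inv (g : Gd d) :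
    Function.LeftInverse ((g⁻¹ : Gd d) : E d →L[ℝ] E d) (g : E d →L[ℝ] E d) :=
  fun u ↦ congrArg (· u) g.inv_mul

lemma ρ_eq_log_norm_unitRep (g : Gd d) (x : ℙ ℝ (E d)) :
    ρ g x = Real.log ‖(g : E d →L[ℝ] E d) (unitRep x)‖ := by
  rw [ρ, unitRep, map_smul, norm_smul, norm_inv, norm_norm, div_eq_inv_mul]

lemma abs_ρ_sub_ρ_le (g : Gd d) (x y : ℙ ℝ (E d)) :
    |ρ g x - ρ g y| ≤ √2 * Nnorm g ^ 2 * dP x y := by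
  set u := unitRep x
  set v := unitRep y
  have hv : ‖v‖ = 1 := norm_unitRep y
  have hlip : ∀ w : E d, ‖w‖ = 1 →
      |ρ g x - Real.log ‖(g : E d →L[ℝ] E d) w‖| ≤ Nnorm g ^ 2 * ‖u - w‖ := fun w hw ↦ by
    rw [ρ_eq_log_norm_unitRep]
    exact (abs_log_norm_apply_sub_le (leftInverse_coe_inv g) (norm_unitRep x) hw).trans
      (mul_le_mul_of_nonneg_right (norm_mul_norm_inv_le_Nnorm_sq g) (norm_nonneg _))
  have hneg := hlip (-v) (by rw [norm_neg, hv])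
  rw [map_neg, norm_neg, sub_neg_eq_add, ← ρ_eq_log_norm_unitRep] at hneg
  have hpos := hlip v hv
  rw [← ρ_eq_log_norm_unitRep] at hpos
  calc |ρ g x - ρ g y| ≤ Nnorm g ^ 2 * min ‖u - v‖ ‖u + v‖ := by
        rw [mul_min_of_nonneg _ _ (by positivity)]
        exact le_min hpos hneg
    _ ≤ Nnorm g ^ 2 * (√2 * angDist u v) := by
        gcongr
        exact min_norm_sub_norm_add_le (norm_unitRep x) hv
    _ = √2 * Nnorm g ^ 2 * dP x y := by rw [dP_eq_angDist_unitRep]; ring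

lemma norm_exp_I_mul_ρ_sub_le {ε : ℝ} (hε₀ : 0 ≤ ε) (hε₁ : ε ≤ 1) (t : ℝ) (g : Gd d)
    (x y : ℙ ℝ (E d)) :
    ‖exp (I * (t * ρ g x)) - exp (I * (t * ρ g y))‖
      ≤ 2 * |t| ^ ε * (dP x y ^ ε * Nnorm g ^ (2 * ε)) := by
  have hd := dP_nonneg x y
  have hdist : |(t * ρ g x - t * ρ g y) / 2| ≤ |t| * (dP x y * Nnorm g ^ 2) := by
    have hsqrt : √2 / 2 ≤ 1 := by
      rw [div_le_one two_pos, Real.sqrt_le_left zero_le_two]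
      norm_num
    rw [← mul_sub, abs_div, abs_mul, abs_two, mul_div_assoc]
    gcongr
    calc |ρ g x - ρ g y| / 2 ≤ √2 / 2 * (dP x y * Nnorm g ^ 2) := by
          rw [div_le_iff₀ two_pos]
          linarith [abs_ρ_sub_ρ_le g x y]
      _ ≤ dP x y * Nnorm g ^ 2 := mul_le_of_le_one_left (by positivity) hsqrt
  have hN : Nnorm g ^ (2 * ε) = (Nnorm g ^ 2) ^ ε := by
    rw [← Real.rpow_natCast_mul (Nnorm_nonneg g)]
    norm_num
  rw [hN, ← Real.mul_rpow hd (sq_nonneg _), mul_assoc,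
    ← Real.mul_rpow (abs_nonneg t) (by positivity)]
  simp only [← ofReal_mul]
  exact (norm_exp_I_mul_sub_exp_I_mul_le hε₀ hε₁ _ _).trans (by gcongr)

end NormCocycle

section Seminorms

variable {d : ℕ} (h : Gd d → ℙ ℝ (E d) → ℂ)

lemma norm_exp_mul_sub_div_le {ε θ α : ℝ} (hε₀ : 0 ≤ ε) (hε₁ : ε ≤ 1) (hθ : 0 ≤ θ)
    (hα : α = 2 * ε + θ) (t : ℝ) (g : Gd d) (x y : ℙ ℝ (E d)) :
    ‖exp (I * (t * ρ g x)) * h g x - exp (I * (t * ρ g y)) * h g y‖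
        / (dP x y ^ ε * Nnorm g ^ α)
      ≤ 2 * |t| ^ ε * (‖h g x‖ / Nnorm g ^ θ)
        + ‖h g x - h g y‖ / (dP x y ^ ε * Nnorm g ^ α) := by
  have hN := Nnorm_nonneg g
  have hD : 0 ≤ dP x y ^ ε := Real.rpow_nonneg (dP_nonneg x y) ε
  have hexp : ‖exp (I * (t * ρ g x)) - exp (I * (t * ρ g y))‖
      / (dP x y ^ ε * Nnorm g ^ (2 * ε)) ≤ 2 * |t| ^ ε :=
    div_le_of_le_mul₀ (mul_nonneg hD (by positivity)) (by positivity)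
      (norm_exp_I_mul_ρ_sub_le hε₀ hε₁ t g x y)
  have hunit : ‖exp (I * (t * ρ g y))‖ = 1 := by
    rw [← ofReal_mul]
    exact norm_exp_I_mul_ofReal _
  calc _ ≤ (‖exp (I * (t * ρ g x)) - exp (I * (t * ρ g y))‖ * ‖h g x‖ + ‖h g x - h g y‖)
        / (dP x y ^ ε * Nnorm g ^ α) :=
        div_le_div_of_nonneg_right (norm_mul_sub_mul_le hunit) (mul_nonneg hD (by positivity))
    _ = ‖exp (I * (t * ρ g x)) - exp (I * (t * ρ g y))‖ / (dP x y ^ ε * Nnorm g ^ (2 * ε))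
          * (‖h g x‖ / Nnorm g ^ θ) + ‖h g x - h g y‖ / (dP x y ^ ε * Nnorm g ^ α) := by
        rw [add_div, hα, Real.rpow_add_of_nonneg hN (by positivity) hθ,
          ← mul_assoc (dP x y ^ ε), mul_div_mul_comm]
    _ ≤ _ := by gcongr

lemma ofReal_norm_div_le_nθ (θ : ℝ) (g : Gd d) (x : ℙ ℝ (E d)) :
    ENNReal.ofReal (‖h g x‖ / Nnorm g ^ θ) ≤ nθ θ h :=
  le_iSup₂ (f := fun g x ↦ ENNReal.ofReal (‖h g x‖ / Nnorm g ^ θ)) g x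

lemma ofReal_norm_sub_div_le_kP (ε α : ℝ) (g : Gd d) {x y : ℙ ℝ (E d)} (hxy : x ≠ y) :
    ENNReal.ofReal (‖h g x - h g y‖ / (dP x y ^ ε * Nnorm g ^ α)) ≤ kP ε α h :=
  le_iSup_of_le g <| le_iSup_of_le x <| le_iSup_of_le y <| le_iSup_of_le hxy le_rfl

end Seminorms

theorem kP_exp_smul_le_general
    {d : ℕ} (δ₀ ε θ α : ℝ) (hδ₀ : 0 < δ₀) (hδ₀' : δ₀ ≤ 8 / 3)
    (hε : ε = δ₀ / 8) (hθ : θ = 3 * ε) (hα : α = 5 * ε)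
    (h : Gd d → ℙ ℝ (E d) → ℂ) (t : ℝ) :
    kP ε α (fun g x => Complex.exp (Complex.I * (t * ρ g x)) * h g x)
      ≤ ENNReal.ofReal (2 * |t| ^ ε) * nθ θ h + kP ε α h := by
  have hε₀ : 0 ≤ ε := by rw [hε]; positivity
  have hε₁ : ε ≤ 1 := by rw [hε]; linarith
  refine iSup_le fun g ↦ iSup_le fun x ↦ iSup_le fun y ↦ iSup_le fun hxy ↦ ?_
  calc _ ≤ ENNReal.ofReal (2 * |t| ^ ε * (‖h g x‖ / Nnorm g ^ θ)
          + ‖h g x - h g y‖ / (dP x y ^ ε * Nnorm g ^ α)) :=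
        ENNReal.ofReal_le_ofReal (norm_exp_mul_sub_div_le h hε₀ hε₁ (by rw [hθ]; positivity)
          (by rw [hα, hθ]; ring) t g x y)
    _ ≤ ENNReal.ofReal (2 * |t| ^ ε) * ENNReal.ofReal (‖h g x‖ / Nnorm g ^ θ) + kP ε α h := by
        rw [← ENNReal.ofReal_mul (by positivity)]
        exact ENNReal.ofReal_add_le.trans
          (add_le_add_right (ofReal_norm_sub_div_le_kP h ε α g hxy) _)
    _ ≤ _ := by
        gcongr
        exact ofReal_norm_div_le_nθ h θ g x

/-- With parameters `ε = δ₀/8`, `θ = 3ε`, `α = 5ε` (so `α = θ + 2ε`; as in the paper we may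
assume `δ₀ ≤ 8/3` without loss of generality), if `h` is continuous with `|h|_θ < ∞` and
`k_{ε,α}(h) < ∞`, then for every `t ∈ ℝ`,
`k_{ε,α}(e^{itρ} h) ≤ 2|t|^ε |h|_θ + k_{ε,α}(h)`. -/
theorem kP_exp_smul_le
    {d : ℕ} (δ₀ ε θ α : ℝ) (hδ₀ : 0 < δ₀) (hδ₀' : δ₀ ≤ 8 / 3)
    (hε : ε = δ₀ / 8) (hθ : θ = 3 * ε) (hα : α = 5 * ε)
    (h : Gd d → ℙ ℝ (E d) → ℂ)
    (hcont : Continuous fun p : Gd d × ℙ ℝ (E d) => h p.1 p.2)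
    (hθfin : nθ θ h ≠ ⊤) (hkfin : kP ε α h ≠ ⊤) (t : ℝ) :
    kP ε α (fun g x => Complex.exp (Complex.I * (t * ρ g x)) * h g x)
      ≤ ENNReal.ofReal (2 * |t| ^ ε) * nθ θ h + kP ε α h :=
  kP_exp_smul_le_general δ₀ ε θ α hδ₀ hδ₀' hε hθ hα h t
end
end
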